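/- Let θ be an infinite cardinal, let H₀ be an infinite-dimensional separable closed subspace of ℓ²(2^ℵ₀) with orthogonal projection p₀, and let K be a dense linear subspace of ℓ²(2^ℵ₀) such that ker(p₀) ∩ K = {0}. Then the dense linear subspace K × ℓ²(θ) of the Hilbert space H = ℓ²(2^ℵ₀) × ℓ²(θ) contains no orthonormal basis of H; that is, there is no orthonormal subset of K × ℓ²(θ) whose closed linear span is all of H. -/

import Mathlib

/-! If `S ⊆ K × ℓ²(θ)` were an orthonormal basis, pick a countable dense set `D` of the separable
space `H₀`. A vector orthogonal to `D` is orthogonal to `H₀`, and by Bessel's inequality only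
countably many members of `S` are non-orthogonal to a given `(d, 0)`. Since `K` meets `H₀ᗮ` only
in `0`, all but countably many members of `S` therefore have first coordinate `0`. The first
coordinates of `S` thus form a countable set with dense span in `ℓ²(2^ℵ₀)`, which would make this
space of uncountable Hilbert dimension separable. -/

open Cardinal

noncomputable section

/-- `ℓ²(κ)`: the complex Hilbert space of square-summable functions on the ordinal `κ.ord`
(realized as the type `κ.ord.toType`). -/
abbrev L2 (θ : Cardinal) : Type := lp (fun _ : θ.ord.ToType => ℂ) 2

/-- The orthogonal direct sum `ℓ²(2^ℵ₀) ⊕ ℓ²(θ)`, i.e. the product with the `L²` norm. -/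
abbrev Hprod (θ : Cardinal) : Type := WithLp 2 (L2 (2 ^ ℵ₀) × L2 θ)

/-- The subspace `K × ℓ²(θ)` of `ℓ²(2^ℵ₀) ⊕ ℓ²(θ)`. -/
def prodSub (θ : Cardinal) (K : Submodule ℂ (L2 (2 ^ ℵ₀))) : Submodule ℂ (Hprod θ) :=
  (K.prod (⊤ : Submodule ℂ (L2 θ))).comap (WithLp.linearEquiv 2 ℂ (L2 (2 ^ ℵ₀) × L2 θ)).toLinearMap

open TopologicalSpace
open scoped InnerProductSpace

section Orthonormal

variable {𝕜 E ι : Type*} [RCLike 𝕜] [NormedAddCommGroup E] [InnerProductSpace 𝕜 E]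
  {v : ι → E}

theorem Orthonormal.one_le_dist (hv : Orthonormal 𝕜 v) {i j : ι} (hij : i ≠ j) :
    1 ≤ dist (v i) (v j) := by
  have hsq : ‖v i - v j‖ ^ 2 = 2 := by
    rw [@norm_sub_sq 𝕜, hv.1 i, hv.1 j, hv.2 hij]
    norm_num
  rw [dist_eq_norm]
  nlinarith [norm_nonneg (v i - v j)]

theorem Orthonormal.countable_of_separableSpace [SeparableSpace E] (hv : Orthonormal 𝕜 v) :
    Countable ι :=
  Pairwise.countable_of_isOpen_disjoint (s := fun i => Metric.ball (v i) (1 / 2))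
    (fun _ _ hij => Metric.ball_disjoint_ball (by linarith [hv.one_le_dist hij]))
    (fun _ => Metric.isOpen_ball) (fun _ => Metric.nonempty_ball.2 one_half_pos)

theorem Orthonormal.countable_setOf_inner_ne_zero (hv : Orthonormal 𝕜 v) (x : E) :
    {i | ⟪v i, x⟫_𝕜 ≠ 0}.Countable := by
  simpa [Function.support] using (hv.inner_products_summable x).countable_support

theorem Orthonormal.countable_setOf_exists_inner_ne_zero (hv : Orthonormal 𝕜 v) {D : Set E}
    (hD : D.Countable) : {i | ∃ d ∈ D, ⟪v i, d⟫_𝕜 ≠ 0}.Countable :=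
  (hD.biUnion fun d _ => hv.countable_setOf_inner_ne_zero d).mono
    fun _ ⟨_, hd, h⟩ => Set.mem_biUnion hd h

theorem Submodule.exists_countable_forall_notMem_orthogonal (U : Submodule 𝕜 E)
    [SeparableSpace U] : ∃ D : Set E, D.Countable ∧ ∀ x ∉ Uᗮ, ∃ d ∈ D, ⟪x, d⟫_𝕜 ≠ 0 := by
  obtain ⟨D, hDc, hD⟩ := exists_countable_dense U
  refine ⟨(↑) '' D, hDc.image _, fun x hx => ?_⟩
  by_contra! h
  have hzero : ∀ u : U, ⟪x, (u : E)⟫_𝕜 = 0 :=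
    congrFun (Continuous.ext_on hD (by fun_prop) continuous_const fun u hu => h u ⟨u, hu, rfl⟩)
  exact hx ((U.mem_orthogonal' x).2 fun u hu => hzero ⟨u, hu⟩)

end Orthonormal

section Prod

variable {𝕜 E F ι : Type*} [RCLike 𝕜] [NormedAddCommGroup E] [InnerProductSpace 𝕜 E]
  [NormedAddCommGroup F] [InnerProductSpace 𝕜 F]

theorem Orthonormal.countable_setOf_fst_ne_zero {v : ι → WithLp 2 (E × F)}
    (hv : Orthonormal 𝕜 v) (U : Submodule 𝕜 E) [SeparableSpace U] {K : Set E}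
    (hvK : ∀ i, (v i).fst ∈ K) (hK : ∀ x ∈ K, x ∈ Uᗮ → x = 0) :
    {i | (v i).fst ≠ 0}.Countable := by
  obtain ⟨D, hDc, hD⟩ := U.exists_countable_forall_notMem_orthogonal
  refine (hv.countable_setOf_exists_inner_ne_zero
    (hDc.image fun d => WithLp.toLp 2 (d, (0 : F)))).mono fun i hi => ?_
  obtain ⟨d, hd, h⟩ := hD _ fun h => hi (hK _ (hvK i) h)
  exact ⟨_, ⟨d, hd, rfl⟩, by simpa using h⟩

end Prod

theorem Submodule.dense_span_image {R M M₂ : Type*} [Semiring R] [AddCommMonoid M] [Module R M]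
    [TopologicalSpace M] [AddCommMonoid M₂] [Module R M₂] [TopologicalSpace M₂]
    {T : M →L[R] M₂} (hT : DenseRange T) {s : Set M} (hs : Dense (span R s : Set M)) :
    Dense (span R (T '' s) : Set M₂) := by
  change Dense (span R ((T : M →ₗ[R] M₂) '' s) : Set M₂)
  rw [← Submodule.map_span, Submodule.map_coe]
  exact hT.dense_image T.continuous hs

theorem separableSpace_of_countable_of_dense_span {R M : Type*} [Semiring R] [AddCommMonoid M]
    [Module R M] [TopologicalSpace M] [TopologicalSpace R] [SeparableSpace R] [ContinuousAdd M]
    [ContinuousSMul R M] {s : Set M} (hs : s.Countable) (hd : Dense (Submodule.span R s : Set M)) :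
    SeparableSpace M :=
  isSeparable_univ_iff.1 (hd.closure_eq ▸ hs.isSeparable.span.closure)

theorem lp.not_separableSpace_of_uncountable (𝕜 ι : Type*) [RCLike 𝕜] [Uncountable ι] :
    ¬ SeparableSpace (lp (fun _ : ι => 𝕜) 2) := fun _ =>
  not_countable (α := ι)
    (default : HilbertBasis ι 𝕜 (lp (fun _ : ι => 𝕜) 2)).orthonormal.countable_of_separableSpace

instance : Uncountable (2 ^ ℵ₀ : Cardinal).ord.ToType :=
  aleph0_lt_mk_iff.1 (by simpa using cantor ℵ₀)

theorem dense_prodSub (θ : Cardinal) {K : Submodule ℂ (L2 (2 ^ ℵ₀))}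
    (hK : Dense (K : Set (L2 (2 ^ ℵ₀)))) : Dense (prodSub θ K : Set (Hprod θ)) :=
  (hK.prod dense_univ).preimage
    (WithLp.prodContinuousLinearEquiv 2 ℂ (L2 (2 ^ ℵ₀)) (L2 θ)).toHomeomorph.isOpenMap

theorem stmt11_general (θ : Cardinal)
    (H₀ : Submodule ℂ (L2 (2 ^ ℵ₀)))
    [CompleteSpace H₀] [TopologicalSpace.SeparableSpace H₀]
    (K : Submodule ℂ (L2 (2 ^ ℵ₀))) (hK : Dense (K : Set (L2 (2 ^ ℵ₀))))
    (hker : ∀ x ∈ K, H₀.orthogonalProjectionOnto x = 0 → x = 0) :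
    Dense ((prodSub θ K : Submodule ℂ (Hprod θ)) : Set (Hprod θ)) ∧
      ¬ ∃ S : Set (Hprod θ), S ⊆ (prodSub θ K : Set (Hprod θ)) ∧
          Orthonormal ℂ (fun s : S => (s : Hprod θ)) ∧
          (Submodule.span ℂ S).topologicalClosure = ⊤ := by
  refine ⟨dense_prodSub θ hK, ?_⟩
  rintro ⟨S, hSK, hS, hspan⟩
  let fst := WithLp.fstL 2 ℂ (L2 (2 ^ ℵ₀)) (L2 θ)
  have hfst : {s : S | fst s ≠ 0}.Countable :=
    hS.countable_setOf_fst_ne_zero H₀ (fun s => (hSK s.2).1)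
      fun x hx hx₀ => hker x hx (H₀.orthogonalProjectionOnto_eq_zero_iff.2 hx₀)
  have hfstS : (fst '' S).Countable := by
    refine ((hfst.image fun s => fst s).insert 0).mono ?_
    rintro _ ⟨s, hs, rfl⟩
    by_cases h : fst s = 0
    · exact Or.inl h
    · exact Or.inr ⟨⟨s, hs⟩, h, rfl⟩
  have hdense : Dense (Submodule.span ℂ (fst '' S) : Set (L2 (2 ^ ℵ₀))) :=
    Submodule.dense_span_image (fun x => subset_closure ⟨WithLp.toLp 2 (x, 0), rfl⟩)
      (Submodule.dense_iff_topologicalClosure_eq_top.2 hspan)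
  exact lp.not_separableSpace_of_uncountable ℂ _
    (separableSpace_of_countable_of_dense_span hfstS hdense)

/-- let `θ` be an infinite cardinal, `H₀` an infinite-dimensional separable
closed subspace of `ℓ²(2^ℵ₀)` with orthogonal projection `p₀`, and `K` a dense linear
subspace of `ℓ²(2^ℵ₀)` with `ker p₀ ∩ K = {0}`. Then the dense subspace `K × ℓ²(θ)` of
`H = ℓ²(2^ℵ₀) ⊕ ℓ²(θ)` contains no orthonormal basis of `H`. -/
theorem stmt11 (θ : Cardinal) (hθ : ℵ₀ ≤ θ)
    (H₀ : Submodule ℂ (L2 (2 ^ ℵ₀))) (hcl : IsClosed (H₀ : Set (L2 (2 ^ ℵ₀))))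
    [CompleteSpace H₀] [TopologicalSpace.SeparableSpace H₀]
    (hinfdim : ¬ FiniteDimensional ℂ H₀)
    (K : Submodule ℂ (L2 (2 ^ ℵ₀))) (hK : Dense (K : Set (L2 (2 ^ ℵ₀))))
    (hker : ∀ x ∈ K, H₀.orthogonalProjectionOnto x = 0 → x = 0) :
    Dense ((prodSub θ K : Submodule ℂ (Hprod θ)) : Set (Hprod θ)) ∧
      ¬ ∃ S : Set (Hprod θ), S ⊆ (prodSub θ K : Set (Hprod θ)) ∧
          Orthonormal ℂ (fun s : S => (s : Hprod θ)) ∧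
          (Submodule.span ℂ S).topologicalClosure = ⊤ :=
  stmt11_general θ H₀ K hK hker
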